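/- With the same assumptions (C¹ ergodic measure-preserving flow with generator V, C¹ symmetric positive-definite kernel with operators K, G = K*K, and polar decomposition K = U G^{1/2} with U a partial isometry): the operator G^{1/2} V G^{1/2} is densely defined and bounded, and it has a unique skew-adjoint extension Ṽ to a Hilbert–Schmidt real operator on L²(μ), given by Ṽ = U* W U where W = K V K*. In particular, if k is L²(μ)-strictly-positive, then Ṽ is unitarily equivalent to the restriction of W to the closure of the range of K. -/

import Mathlib

/-!
Since `U` is a contraction that is isometric on `ran G^{1/2}`, `U*U` fixes `ran G^{1/2}`, so
`U* K = G^{1/2}` and, taking adjoints, `K* U = G^{1/2}`. Hence `G^{1/2}` maps into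
`ran K* ⊆ D(V)`, and `G^{1/2} V G^{1/2} = U* W U` is everywhere defined. The mean value theorem
along orbits bounds the difference quotients of `K* h` by `‖h‖ sup ‖φd‖` over the compact set
`Φ([-1, 1] × X)`, so `D = V K*` is bounded and `W = K D`. The Koopman operators are isometries,
so `V` is skew-symmetric, which makes `W` and `Ṽ = U* W U` skew-adjoint. Finally
`Ṽ = -Ṽ* = -(U* D* U*) K`, and `K` is Hilbert–Schmidt because `K*` is an integral operator whose
kernel is bounded on the support of `μ`.
-/

open MeasureTheory Filter Topology ContinuousLinearMap
open scoped InnerProductSpace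

universe u

section PolarDecomposition

variable {𝕜 E F : Type*} [RCLike 𝕜] [NormedAddCommGroup E] [InnerProductSpace 𝕜 E]
  [CompleteSpace E] [NormedAddCommGroup F] [InnerProductSpace 𝕜 F] [CompleteSpace F]

theorem ContinuousLinearMap.adjoint_apply_apply_eq_self {U : E →L[𝕜] F}
    (hU : ∀ x, ‖U x‖ ≤ ‖x‖) {x : E} (hx : ‖U x‖ = ‖x‖) : adjoint U (U x) = x := by
  have hUadj : ‖adjoint U (U x)‖ ≤ ‖x‖ := calc
    ‖adjoint U (U x)‖ ≤ ‖adjoint U‖ * ‖U x‖ := le_opNorm _ _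
    _ ≤ 1 * ‖x‖ := by
      rw [LinearIsometryEquiv.norm_map, hx]
      gcongr
      exact opNorm_le_bound _ zero_le_one fun y => by simpa using hU y
    _ = ‖x‖ := one_mul _
  have hinner : RCLike.re ⟪adjoint U (U x), x⟫_𝕜 = ‖x‖ ^ 2 := by
    rw [adjoint_inner_left, inner_self_eq_norm_sq, hx]
  have hsq : ‖adjoint U (U x) - x‖ ^ 2 ≤ 0 := by
    rw [norm_sub_sq (𝕜 := 𝕜), hinner]
    nlinarith [norm_nonneg (adjoint U (U x)), norm_nonneg x]
  rw [← sub_eq_zero, ← norm_eq_zero]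
  exact pow_eq_zero_iff two_ne_zero |>.mp (le_antisymm hsq (sq_nonneg _))

theorem ContinuousLinearMap.adjoint_comp_eq_of_polar {K U : E →L[𝕜] F} {S : E →L[𝕜] E}
    (hpolar : K = U ∘L S) (hU : ∀ x, ‖U x‖ ≤ ‖x‖) (hUS : ∀ x, ‖U (S x)‖ = ‖S x‖) :
    adjoint U ∘L K = S := by
  ext x
  simp [hpolar, adjoint_apply_apply_eq_self hU (hUS x)]

theorem ContinuousLinearMap.adjoint_comp_eq_neg {A : E →L[𝕜] F} {D : F →L[𝕜] E}
    (hD : ∀ x y, ⟪D x, adjoint A y⟫_𝕜 = -⟪adjoint A x, D y⟫_𝕜) :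
    adjoint (A ∘L D) = -(A ∘L D) := by
  ext x
  refine ext_inner_right 𝕜 fun y => ?_
  rw [adjoint_inner_left, neg_apply, inner_neg_left, comp_apply, comp_apply,
    ← adjoint_inner_left A (D y) x, ← adjoint_inner_right A (D x) y, hD, neg_neg]

theorem ContinuousLinearMap.adjoint_comp_comp_eq_neg_comp {K U : E →L[𝕜] F} {D : F →L[𝕜] E}
    (hskew : adjoint (K ∘L D) = -(K ∘L D)) (hKU : adjoint K ∘L U = adjoint U ∘L K) :
    adjoint U ∘L (K ∘L D) ∘L U = -((adjoint U ∘L adjoint D ∘L adjoint U) ∘L K) := by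
  rw [← neg_neg (K ∘L D), ← hskew]
  ext x
  have hx : adjoint K (U x) = adjoint U (K x) := congr($hKU x)
  simp only [comp_apply, neg_apply, adjoint_comp, map_neg, hx]

theorem IsSelfAdjoint.denseRange_of_injective {S : E →L[𝕜] E} (hS : IsSelfAdjoint S)
    (hinj : Function.Injective S) : DenseRange S := by
  have h : (S : E →ₗ[𝕜] E).range.topologicalClosure = ⊤ := by
    rw [Submodule.topologicalClosure_eq_top_iff, orthogonal_range, hS.adjoint_eq]
    exact LinearMap.ker_eq_bot.mpr hinj
  simpa [denseRange_iff_closure_range, Submodule.topologicalClosure_coe, LinearMap.coe_range]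
    using congrArg SetLike.coe h

end PolarDecomposition

section HilbertSchmidt

variable {E F : Type*} [NormedAddCommGroup E] [InnerProductSpace ℝ E]
  [NormedAddCommGroup F] [InnerProductSpace ℝ F]

theorem Orthonormal.sum_sq_inner_le {ι : Type*} {v : ι → E} (hv : Orthonormal ℝ v)
    (s : Finset ι) (x : E) : ∑ i ∈ s, ⟪v i, x⟫_ℝ ^ 2 ≤ ‖x‖ ^ 2 := by
  simpa [Real.norm_eq_abs, sq_abs] using hv.sum_inner_products_le (s := s) x

theorem HilbertBasis.hasSum_sq_inner {ι : Type*} (b : HilbertBasis ι ℝ E) (x : E) :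
    HasSum (fun i => ⟪x, b i⟫_ℝ ^ 2) (‖x‖ ^ 2) := by
  simpa [sq, real_inner_comm x, ← real_inner_self_eq_norm_sq] using b.hasSum_inner_mul_inner x x

theorem Orthonormal.summable_sq_norm_apply_of_adjoint [CompleteSpace E] [CompleteSpace F]
    {ι κ : Type*} {v : ι → E} (hv : Orthonormal ℝ v) (c : HilbertBasis κ ℝ F) (T : E →L[ℝ] F)
    (hT : Summable fun j => ‖adjoint T (c j)‖ ^ 2) : Summable fun i => ‖T (v i)‖ ^ 2 := by
  refine summable_of_sum_le (c := ∑' j, ‖adjoint T (c j)‖ ^ 2) (fun _ => sq_nonneg _)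
    fun s => ?_
  calc ∑ i ∈ s, ‖T (v i)‖ ^ 2 = ∑ i ∈ s, ∑' j, ⟪v i, adjoint T (c j)⟫_ℝ ^ 2 := by
        refine Finset.sum_congr rfl fun i _ => ?_
        simp_rw [adjoint_inner_right]
        exact (c.hasSum_sq_inner _).tsum_eq.symm
    _ = ∑' j, ∑ i ∈ s, ⟪v i, adjoint T (c j)⟫_ℝ ^ 2 := by
        refine (Summable.tsum_finsetSum fun i _ => ?_).symm
        simpa [adjoint_inner_right] using (c.hasSum_sq_inner (T (v i))).summable
    _ ≤ ∑' j, ‖adjoint T (c j)‖ ^ 2 :=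
        Summable.tsum_le_tsum (fun j => hv.sum_sq_inner_le s _)
          (summable_sum fun i _ => by
            simpa [adjoint_inner_right] using (c.hasSum_sq_inner (T (v i))).summable) hT

theorem summable_sq_norm_apply_of_summable {G : Type*} [NormedAddCommGroup G]
    [NormedSpace ℝ G] {ι : Type*} {v : ι → F} (A : F →L[ℝ] G)
    (hv : Summable fun i => ‖v i‖ ^ 2) : Summable fun i => ‖A (v i)‖ ^ 2 :=
  (hv.mul_left (‖A‖ ^ 2)).of_nonneg_of_le (fun _ => sq_nonneg _) fun i => by
    rw [← mul_pow]
    gcongr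
    exact A.le_opNorm _

theorem HilbertBasis.summable_sq_norm_of_ae_eq_inner {α κ : Type*} [MeasurableSpace α]
    {μ : Measure α} [IsFiniteMeasure μ] (c : HilbertBasis κ ℝ F) (T : F →L[ℝ] Lp ℝ 2 μ)
    {φ : α → F} (hT : ∀ h, T h =ᵐ[μ] fun x => ⟪φ x, h⟫_ℝ) {B : ℝ}
    (hB : ∀ᵐ x ∂μ, ‖φ x‖ ≤ B) : Summable fun j => ‖T (c j)‖ ^ 2 := by
  have hsq : ∀ h, (fun x => ⟪T h x, T h x⟫_ℝ) =ᵐ[μ] fun x => ⟪φ x, h⟫_ℝ ^ 2 := fun h => by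
    filter_upwards [hT h] with x hx
    simp [hx, sq]
  have hint : ∀ h, Integrable (fun x => ⟪φ x, h⟫_ℝ ^ 2) μ := fun h =>
    (L2.integrable_inner (T h) (T h)).congr (hsq h)
  refine summable_of_sum_le (c := μ.real Set.univ * B ^ 2) (fun _ => sq_nonneg _) fun s => ?_
  calc ∑ j ∈ s, ‖T (c j)‖ ^ 2 = ∫ x, ∑ j ∈ s, ⟪c j, φ x⟫_ℝ ^ 2 ∂μ := by
        simp_rw [real_inner_comm (φ _)]
        rw [integral_finsetSum s fun j _ => hint (c j)]
        refine Finset.sum_congr rfl fun j _ => ?_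
        rw [← real_inner_self_eq_norm_sq, L2.inner_def]
        exact integral_congr_ae (hsq (c j))
    _ ≤ ∫ _, B ^ 2 ∂μ := by
        refine integral_mono_ae (integrable_finsetSum s fun j _ => ?_) (integrable_const _) ?_
        · simpa [real_inner_comm] using hint (c j)
        · filter_upwards [hB] with x hx
          exact (c.orthonormal.sum_sq_inner_le s _).trans (by gcongr)
    _ = μ.real Set.univ * B ^ 2 := by rw [integral_const, smul_eq_mul]

theorem Orthonormal.summable_sq_norm_apply_of_adjoint_ae_eq_inner [CompleteSpace F]
    {α ι : Type*} [MeasurableSpace α] {μ : Measure α} [IsFiniteMeasure μ]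
    {v : ι → Lp ℝ 2 μ} (hv : Orthonormal ℝ v) (K : Lp ℝ 2 μ →L[ℝ] F) {φ : α → F}
    (hK : ∀ h, adjoint K h =ᵐ[μ] fun x => ⟪φ x, h⟫_ℝ) {B : ℝ} (hB : ∀ᵐ x ∂μ, ‖φ x‖ ≤ B) :
    Summable fun i => ‖K (v i)‖ ^ 2 := by
  obtain ⟨_, c, -⟩ := exists_hilbertBasis ℝ F
  exact hv.summable_sq_norm_apply_of_adjoint c K (c.summable_sq_norm_of_ae_eq_inner _ hK hB)

end HilbertSchmidt

theorem LinearPMap.exists_continuousLinearMap_apply_eq {𝕜 E F G : Type*}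
    [NontriviallyNormedField 𝕜] [AddCommGroup E] [Module 𝕜 E] [NormedAddCommGroup F]
    [NormedSpace 𝕜 F] [NormedAddCommGroup G] [NormedSpace 𝕜 G] (V : E →ₗ.[𝕜] F)
    (T : G →ₗ[𝕜] E) (hT : ∀ x, T x ∈ V.domain) {M : ℝ}
    (hM : ∀ x, ‖V ⟨T x, hT x⟩‖ ≤ M * ‖x‖) :
    ∃ D : G →L[𝕜] F, ∀ x, D x = V ⟨T x, hT x⟩ :=
  ⟨(V.toFun ∘ₗ T.codRestrict V.domain hT).mkContinuous M hM, fun _ => rfl⟩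

section Flow

variable {α E : Type*} [NormedAddCommGroup E] {Φ : ℝ → α → α}

theorem hasDerivAt_comp_flow [NormedSpace ℝ E] (hΦgrp : ∀ s t x, Φ s (Φ t x) = Φ (s + t) x)
    {F F' : α → E} (hF : ∀ x, HasDerivAt (fun t => F (Φ t x)) (F' x) 0) (x : α) (s : ℝ) :
    HasDerivAt (fun t => F (Φ t x)) (F' (Φ s x)) s := by
  have h := HasDerivAt.comp_sub_const s s (by rw [sub_self]; exact hF (Φ s x))
  simpa only [hΦgrp, sub_add_cancel] using h

theorem norm_sub_le_of_hasDerivAt_flow [NormedSpace ℝ E] (hΦ0 : ∀ x, Φ 0 x = x)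
    (hΦgrp : ∀ s t x, Φ s (Φ t x) = Φ (s + t) x) {F F' : α → E}
    (hF : ∀ x, HasDerivAt (fun t => F (Φ t x)) (F' x) 0) {x : α} {M : ℝ}
    (hM : ∀ s ∈ Set.Icc (-1 : ℝ) 1, ‖F' (Φ s x)‖ ≤ M) {t : ℝ} (ht : t ∈ Set.Icc (-1 : ℝ) 1) :
    ‖F (Φ t x) - F x‖ ≤ M * |t| := by
  have h := (convex_Icc (-1 : ℝ) 1).norm_image_sub_le_of_norm_hasDerivWithin_le
    (fun s _ => (hasDerivAt_comp_flow hΦgrp hF x s).hasDerivWithinAt) hM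
    (x := 0) ⟨by norm_num, by norm_num⟩ ht
  simpa [hΦ0, Real.norm_eq_abs] using h

theorem exists_ae_forall_norm_le_flow [MeasurableSpace α] [TopologicalSpace α] {μ : Measure α}
    {X : Set α} (hXc : IsCompact X) (hXfull : μ Xᶜ = 0)
    (hΦcont : Continuous fun p : ℝ × α => Φ p.1 p.2) {g : α → E} (hg : Continuous g) :
    ∃ M, 0 ≤ M ∧ ∀ᵐ x ∂μ, ∀ s ∈ Set.Icc (-1 : ℝ) 1, ‖g (Φ s x)‖ ≤ M := by
  obtain ⟨M, hM⟩ :=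
    ((isCompact_Icc.prod hXc).image hΦcont).exists_bound_of_continuousOn hg.continuousOn
  refine ⟨max M 0, le_max_right _ _, ?_⟩
  filter_upwards [mem_ae_iff.mpr hXfull] with x hx s hs
  exact (hM _ ⟨(s, x), ⟨hs, hx⟩, rfl⟩).trans (le_max_left _ _)

end Flow

section Koopman

variable {α : Type*} [MeasurableSpace α] {μ : Measure α} {Φ : ℝ → α → α}
  {Koop : ℝ → Lp ℝ 2 μ →L[ℝ] Lp ℝ 2 μ}

theorem inner_add_inner_eq_zero_of_tendsto_slope {E : Type*} [NormedAddCommGroup E]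
    [InnerProductSpace ℝ E] {T : ℝ → E →L[ℝ] E} (hT0 : ∀ f, T 0 f = f)
    (hT : ∀ t f, ‖T t f‖ = ‖f‖) {f g v w : E}
    (hf : Tendsto (fun t : ℝ => t⁻¹ • (T t f - f)) (𝓝[≠] 0) (𝓝 v))
    (hg : Tendsto (fun t : ℝ => t⁻¹ • (T t g - g)) (𝓝[≠] 0) (𝓝 w)) :
    ⟪v, g⟫_ℝ + ⟪f, w⟫_ℝ = 0 := by
  have hderiv : ∀ {u u' : E}, Tendsto (fun t : ℝ => t⁻¹ • (T t u - u)) (𝓝[≠] 0) (𝓝 u') →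
      HasDerivAt (fun t => T t u) u' 0 := fun {u _} h => by
    have hslope : slope (fun t => T t u) 0 = fun t => t⁻¹ • (T t u - u) :=
      funext fun t => by simp [slope_def_module, hT0]
    rwa [hasDerivAt_iff_tendsto_slope, hslope]
  have hconst : (fun t => ⟪T t f, T t g⟫_ℝ) = fun _ => ⟪f, g⟫_ℝ :=
    funext fun t => (⟨(T t).toLinearMap, hT t⟩ : E →ₗᵢ[ℝ] E).inner_map_map f g
  have h := (hderiv hf).inner ℝ (hderiv hg)
  rw [hconst, hT0, hT0] at h
  rw [add_comm]
  exact h.unique (hasDerivAt_const 0 _)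

theorem koopman_zero_apply
    (hKoop : ∀ t (f : Lp ℝ 2 μ), ∀ᵐ x ∂μ, (Koop t f) x = f (Φ t x))
    (hΦ0 : ∀ x, Φ 0 x = x) (f : Lp ℝ 2 μ) : Koop 0 f = f :=
  Lp.ext <| by
    filter_upwards [hKoop 0 f] with x hx
    rw [hx, hΦ0]

theorem norm_koopman_apply
    (hKoop : ∀ t (f : Lp ℝ 2 μ), ∀ᵐ x ∂μ, (Koop t f) x = f (Φ t x))
    {t : ℝ} (ht : MeasurePreserving (Φ t) μ μ) (f : Lp ℝ 2 μ) :
    ‖Koop t f‖ = ‖f‖ := by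
  rw [← Lp.norm_compMeasurePreserving f ht]
  refine congrArg norm (Lp.ext ?_)
  exact EventuallyEq.trans (hKoop t f) (Lp.coeFn_compMeasurePreserving f ht).symm

theorem norm_koopman_sub_le [IsProbabilityMeasure μ]
    (hKoop : ∀ t (f : Lp ℝ 2 μ), ∀ᵐ x ∂μ, (Koop t f) x = f (Φ t x)) {t : ℝ}
    (ht : Measure.QuasiMeasurePreserving (Φ t) μ μ) {f : Lp ℝ 2 μ} {ψ : α → ℝ}
    (hf : f =ᵐ[μ] ψ) {C : ℝ} (hC : 0 ≤ C) (hψ : ∀ᵐ x ∂μ, |ψ (Φ t x) - ψ x| ≤ C) :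
    ‖Koop t f - f‖ ≤ C := by
  have h := Lp.norm_le_of_ae_bound (f := Koop t f - f) hC <| by
    filter_upwards [Lp.coeFn_sub (Koop t f) f, hKoop t f, ht.ae_eq_comp hf, hf, hψ]
      with x hsub hKx hfΦ hfx hψx
    rw [Function.comp_apply, Function.comp_apply] at hfΦ
    rwa [hsub, Pi.sub_apply, hKx, hfx, hfΦ, Real.norm_eq_abs]
  simpa [measureUnivNNReal] using h

theorem norm_le_of_tendsto_koopman_slope [IsProbabilityMeasure μ]
    (hKoop : ∀ t (f : Lp ℝ 2 μ), ∀ᵐ x ∂μ, (Koop t f) x = f (Φ t x))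
    (hΦ : ∀ t, Measure.QuasiMeasurePreserving (Φ t) μ μ) {f : Lp ℝ 2 μ} {ψ : α → ℝ}
    (hf : f =ᵐ[μ] ψ) {C : ℝ} (hC : 0 ≤ C)
    (hψ : ∀ᵐ x ∂μ, ∀ t ∈ Set.Icc (-1 : ℝ) 1, |ψ (Φ t x) - ψ x| ≤ C * |t|) {v : Lp ℝ 2 μ}
    (hv : Tendsto (fun t : ℝ => t⁻¹ • (Koop t f - f)) (𝓝[≠] 0) (𝓝 v)) : ‖v‖ ≤ C := by
  have hIcc : ∀ᶠ t : ℝ in 𝓝[≠] 0, t ∈ Set.Icc (-1 : ℝ) 1 :=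
    eventually_nhdsWithin_of_eventually_nhds (Icc_mem_nhds (by norm_num) (by norm_num))
  refine le_of_tendsto hv.norm ?_
  filter_upwards [hIcc, self_mem_nhdsWithin] with t ht ht0
  have ht0' : 0 < |t| := abs_pos.mpr ht0
  calc ‖t⁻¹ • (Koop t f - f)‖ = |t|⁻¹ * ‖Koop t f - f‖ := by
        rw [norm_smul, norm_inv, Real.norm_eq_abs]
    _ ≤ |t|⁻¹ * (C * |t|) := by
        gcongr
        exact norm_koopman_sub_le hKoop (hΦ t) hf (by positivity) (hψ.mono fun x hx => hx t ht)
    _ = C := by field_simp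

theorem inner_generator_add_inner_generator_eq_zero (hΦ0 : ∀ x, Φ 0 x = x)
    (hΦmp : ∀ t, MeasurePreserving (Φ t) μ μ)
    (hKoop : ∀ t (f : Lp ℝ 2 μ), ∀ᵐ x ∂μ, (Koop t f) x = f (Φ t x))
    {V : Lp ℝ 2 μ →ₗ.[ℝ] Lp ℝ 2 μ}
    (hVgen : ∀ f (hf : f ∈ V.domain),
      Tendsto (fun t : ℝ => t⁻¹ • (Koop t f - f)) (𝓝[≠] (0 : ℝ)) (𝓝 (V ⟨f, hf⟩)))
    (f g : V.domain) : ⟪V f, g⟫_ℝ + ⟪(f : Lp ℝ 2 μ), V g⟫_ℝ = 0 :=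
  inner_add_inner_eq_zero_of_tendsto_slope (koopman_zero_apply hKoop hΦ0)
    (fun t => norm_koopman_apply hKoop (hΦmp t)) (hVgen f f.2) (hVgen g g.2)

end Koopman

theorem exists_continuousLinearMap_eq_generator_comp {α HK : Type*} [MeasurableSpace α]
    [TopologicalSpace α] {μ : Measure α} [IsProbabilityMeasure μ] {X : Set α}
    (hXc : IsCompact X) (hXfull : μ Xᶜ = 0) {Φ : ℝ → α → α} (hΦ0 : ∀ x, Φ 0 x = x)
    (hΦgrp : ∀ s t x, Φ s (Φ t x) = Φ (s + t) x)
    (hΦcont : Continuous fun p : ℝ × α => Φ p.1 p.2)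
    (hΦ : ∀ t, Measure.QuasiMeasurePreserving (Φ t) μ μ)
    {Koop : ℝ → Lp ℝ 2 μ →L[ℝ] Lp ℝ 2 μ}
    (hKoop : ∀ t (f : Lp ℝ 2 μ), ∀ᵐ x ∂μ, (Koop t f) x = f (Φ t x))
    {V : Lp ℝ 2 μ →ₗ.[ℝ] Lp ℝ 2 μ}
    (hVgen : ∀ f (hf : f ∈ V.domain),
      Tendsto (fun t : ℝ => t⁻¹ • (Koop t f - f)) (𝓝[≠] (0 : ℝ)) (𝓝 (V ⟨f, hf⟩)))
    [NormedAddCommGroup HK] [InnerProductSpace ℝ HK] {φf φd : α → HK} (hφdc : Continuous φd)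
    (hφd : ∀ x, HasDerivAt (fun t => φf (Φ t x)) (φd x) 0) {Kst : HK →L[ℝ] Lp ℝ 2 μ}
    (hKst : ∀ h : HK, ∀ᵐ x ∂μ, (Kst h) x = ⟪φf x, h⟫_ℝ) (hKstdom : ∀ h, Kst h ∈ V.domain) :
    ∃ D : HK →L[ℝ] Lp ℝ 2 μ, ∀ h, D h = V ⟨Kst h, hKstdom h⟩ := by
  obtain ⟨M, hM0, hM⟩ := exists_ae_forall_norm_le_flow hXc hXfull hΦcont hφdc
  refine V.exists_continuousLinearMap_apply_eq (Kst : HK →ₗ[ℝ] Lp ℝ 2 μ) hKstdom (M := M)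
    fun h => norm_le_of_tendsto_koopman_slope hKoop hΦ (hKst h) (by positivity) ?_ (hVgen _ _)
  filter_upwards [hM] with x hx t ht
  calc |⟪φf (Φ t x), h⟫_ℝ - ⟪φf x, h⟫_ℝ| = |⟪φf (Φ t x) - φf x, h⟫_ℝ| := by
        rw [inner_sub_left]
    _ ≤ ‖φf (Φ t x) - φf x‖ * ‖h‖ := abs_real_inner_le_norm _ _
    _ ≤ M * |t| * ‖h‖ := by gcongr; exact norm_sub_le_of_hasDerivAt_flow hΦ0 hΦgrp hφd hx ht
    _ = M * ‖h‖ * |t| := by ring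

section DenseRange

variable {𝕜 E F : Type*} [RCLike 𝕜] [NormedAddCommGroup E] [NormedSpace 𝕜 E]
  [NormedAddCommGroup F] [NormedSpace 𝕜 F] {U : E →L[𝕜] F} {S : E →L[𝕜] E}

theorem norm_apply_eq_of_denseRange (hS : DenseRange S) (hUS : ∀ x, ‖U (S x)‖ = ‖S x‖)
    (x : E) : ‖U x‖ = ‖x‖ :=
  hS.induction_on x (isClosed_eq (continuous_norm.comp U.continuous) continuous_norm) hUS

theorem closure_range_eq_closure_range_comp_of_denseRange (hS : DenseRange S) :
    closure (Set.range U) = closure (Set.range (U ∘L S)) := by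
  rw [coe_comp, Set.range_comp]
  exact (closure_minimal (U.continuous.range_subset_closure_image_dense hS)
    isClosed_closure).antisymm (closure_mono (Set.image_subset_range _ _))

end DenseRange

theorem stmt7_general {α : Type u} [MeasurableSpace α] [MetricSpace α]
    (μ : Measure α) [IsProbabilityMeasure μ]
    (X : Set α) (hXc : IsCompact X) (hXfull : μ Xᶜ = 0)
    (Φ : ℝ → α → α)
    (hΦ0 : ∀ x, Φ 0 x = x)
    (hΦgrp : ∀ s t x, Φ s (Φ t x) = Φ (s + t) x)
    (hΦcont : Continuous fun p : ℝ × α => Φ p.1 p.2)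
    (hΦmp : ∀ t, MeasurePreserving (Φ t) μ μ)
    (Koop : ℝ → Lp ℝ 2 μ →L[ℝ] Lp ℝ 2 μ)
    (hKoop : ∀ t (f : Lp ℝ 2 μ), ∀ᵐ x ∂μ, (Koop t f) x = f (Φ t x))
    (V : Lp ℝ 2 μ →ₗ.[ℝ] Lp ℝ 2 μ)
    (hVgen : ∀ f (hf : f ∈ V.domain),
      Tendsto (fun t : ℝ => t⁻¹ • (Koop t f - f)) (𝓝[≠] (0 : ℝ)) (𝓝 (V ⟨f, hf⟩)))
    -- the RKHS of `k`, encoded by its feature map: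
    {HK : Type u} [NormedAddCommGroup HK] [InnerProductSpace ℝ HK] [CompleteSpace HK]
    (φf φd : α → HK) (hφc : Continuous φf) (hφdc : Continuous φd)
    (hφd : ∀ x, HasDerivAt (fun t => φf (Φ t x)) (φd x) 0)
    (K : Lp ℝ 2 μ →L[ℝ] HK) (Kst : HK →L[ℝ] Lp ℝ 2 μ)
    (hadj : ContinuousLinearMap.adjoint K = Kst)
    (hKst : ∀ h : HK, ∀ᵐ x ∂μ, (Kst h) x = (inner ℝ (φf x) h : ℝ))
    (G : Lp ℝ 2 μ →L[ℝ] Lp ℝ 2 μ)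
    -- the positive square root `G^{1/2}`:
    (sqrtG : Lp ℝ 2 μ →L[ℝ] Lp ℝ 2 μ)
    (hsq : sqrtG.comp sqrtG = G)
    (hsqsa : IsSelfAdjoint sqrtG)
    -- the partial isometry `U` of the polar decomposition `K = U G^{1/2}`:
    (Uiso : Lp ℝ 2 μ →L[ℝ] HK)
    (hpolar : K = Uiso.comp sqrtG)
    (hUcontr : ∀ f, ‖Uiso f‖ ≤ ‖f‖)
    (hUinit : ∀ f, ‖Uiso (sqrtG f)‖ = ‖sqrtG f‖)
    -- the RKHS-compactified generator `W = K V K*`: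
    (hKstdom : ∀ h : HK, Kst h ∈ V.domain)
    (W : HK →L[ℝ] HK)
    (hW : ∀ h (hh : Kst h ∈ V.domain), W h = K (V ⟨Kst h, hh⟩)) :
    Dense {f : Lp ℝ 2 μ | sqrtG f ∈ V.domain} ∧
    (∃ C : ℝ, 0 ≤ C ∧ ∀ f (hf : sqrtG f ∈ V.domain),
      ‖sqrtG (V ⟨sqrtG f, hf⟩)‖ ≤ C * ‖f‖) ∧
    ∃ Vt : Lp ℝ 2 μ →L[ℝ] Lp ℝ 2 μ,
      (∀ f (hf : sqrtG f ∈ V.domain), Vt f = sqrtG (V ⟨sqrtG f, hf⟩)) ∧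
      ContinuousLinearMap.adjoint Vt = -Vt ∧
      (∀ {ι : Type u} (b : HilbertBasis ι ℝ (Lp ℝ 2 μ)),
        Summable fun i => ‖Vt (b i)‖ ^ 2) ∧
      Vt = (ContinuousLinearMap.adjoint Uiso).comp (W.comp Uiso) ∧
      (∀ Vt' : Lp ℝ 2 μ →L[ℝ] Lp ℝ 2 μ,
        ContinuousLinearMap.adjoint Vt' = -Vt' →
        (∀ f (hf : sqrtG f ∈ V.domain), Vt' f = sqrtG (V ⟨sqrtG f, hf⟩)) →
        Vt' = Vt) ∧
      (Function.Injective G →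
        (∀ f, ‖Uiso f‖ = ‖f‖) ∧
        closure (Set.range Uiso) = closure (Set.range K)) := by
  have hUK : adjoint Uiso ∘L K = sqrtG := adjoint_comp_eq_of_polar hpolar hUcontr hUinit
  have hKstU : Kst ∘L Uiso = sqrtG := by
    rw [← hadj, ← hsqsa.adjoint_eq, ← hUK, adjoint_comp, adjoint_adjoint]
  have hdom : ∀ f, sqrtG f ∈ V.domain := fun f => hKstU ▸ hKstdom (Uiso f)
  obtain ⟨D, hD⟩ := exists_continuousLinearMap_eq_generator_comp hXc hXfull hΦ0 hΦgrp hΦcont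
    (fun t => (hΦmp t).quasiMeasurePreserving) hKoop hVgen hφdc hφd hKst hKstdom
  have hWD : W = K ∘L D := ext fun h => by rw [hW h (hKstdom h), comp_apply, hD]
  have hKDskew : adjoint (K ∘L D) = -(K ∘L D) := adjoint_comp_eq_neg fun h v => by
    rw [hadj, hD, hD, eq_neg_iff_add_eq_zero]
    exact inner_generator_add_inner_generator_eq_zero hΦ0 hΦmp hKoop hVgen
      ⟨Kst h, hKstdom h⟩ ⟨Kst v, hKstdom v⟩
  have hVt : ∀ f (hf : sqrtG f ∈ V.domain),
      (adjoint Uiso ∘L W ∘L Uiso) f = sqrtG (V ⟨sqrtG f, hf⟩) := fun f hf => by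
    rw [comp_apply, comp_apply, hW _ (hKstdom _),
      show (⟨Kst (Uiso f), _⟩ : V.domain) = ⟨sqrtG f, hf⟩ from Subtype.ext congr($hKstU f)]
    exact congr($hUK _)
  obtain ⟨B, -, hB⟩ := exists_ae_forall_norm_le_flow hXc hXfull hΦcont hφc
  have hφB : ∀ᵐ x ∂μ, ‖φf x‖ ≤ B := hB.mono fun x hx => by simpa [hΦ0] using hx 0 (by simp)
  refine ⟨by simp [hdom], ⟨_, norm_nonneg _, fun f hf => hVt f hf ▸ le_opNorm _ f⟩, _, hVt,
    by simp [adjoint_comp, hWD ▸ hKDskew, comp_assoc], fun b => ?_, rfl,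
    fun Vt' _ hVt' => ext fun f => (hVt' f (hdom f)).trans (hVt f (hdom f)).symm, fun hGinj => ?_⟩
  · have hKHS := b.orthonormal.summable_sq_norm_apply_of_adjoint_ae_eq_inner K (hadj ▸ hKst) hφB
    rw [hWD, adjoint_comp_comp_eq_neg_comp hKDskew (hadj ▸ hKstU.trans hUK.symm)]
    simpa only [neg_apply, norm_neg, comp_apply] using
      summable_sq_norm_apply_of_summable (adjoint Uiso ∘L adjoint D ∘L adjoint Uiso) hKHS
  · have hS : DenseRange sqrtG := hsqsa.denseRange_of_injective
      (Function.Injective.of_comp (f := sqrtG) (by rwa [← coe_comp, hsq]))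
    exact ⟨norm_apply_eq_of_denseRange hS hUinit,
      hpolar ▸ closure_range_eq_closure_range_comp_of_denseRange hS⟩

/-- Skew-adjoint compactification.  With a measure-preserving ergodic `C¹` flow with
skew-adjoint Koopman generator `V` on `L²(μ)`, a `C¹` symmetric positive-definite kernel
`k` with RKHS `H_K` (feature map `φf`, flow derivative `φd`), integral operators
`K : L²(μ) → H_K`, `K* = Kst`, `G = K*K`, positive square root `G^{1/2} = sqrtG`, polar
decomposition `K = U G^{1/2}` with partial isometry `U = Uiso` (initial space the closure
of `ran G^{1/2}`), and `W = K V K*`: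
the operator `G^{1/2} V G^{1/2}` is densely defined and bounded, and has a unique
skew-adjoint extension `Ṽ` to a Hilbert–Schmidt operator on `L²(μ)`, given by
`Ṽ = U* W U`.  If moreover `k` is `L²(μ)`-strictly-positive (`G` injective), then `U` is
an isometry whose range is dense in `K̄ = closure(ran K)`, so that `Ṽ` is unitarily
equivalent to `W` restricted to `K̄`. -/
theorem stmt7 {α : Type u} [MeasurableSpace α] [MetricSpace α] [BorelSpace α]
    (μ : Measure α) [IsProbabilityMeasure μ]
    (X : Set α) (hXc : IsCompact X) (hXfull : μ Xᶜ = 0)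
    (Φ : ℝ → α → α)
    (hΦ0 : ∀ x, Φ 0 x = x)
    (hΦgrp : ∀ s t x, Φ s (Φ t x) = Φ (s + t) x)
    (hΦcont : Continuous fun p : ℝ × α => Φ p.1 p.2)
    (hΦmp : ∀ t, MeasurePreserving (Φ t) μ μ)
    (k k' : α → α → ℝ)
    (hksymm : ∀ x y, k x y = k y x)
    (hkC : Continuous fun p : α × α => k p.1 p.2)
    (hk'C : Continuous fun p : α × α => k' p.1 p.2)
    (hk' : ∀ x y, HasDerivAt (fun t => k (Φ t x) y) (k' x y) 0)
    (Koop : ℝ → Lp ℝ 2 μ →L[ℝ] Lp ℝ 2 μ)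
    (hKoop : ∀ t (f : Lp ℝ 2 μ), ∀ᵐ x ∂μ, (Koop t f) x = f (Φ t x))
    (V : Lp ℝ 2 μ →ₗ.[ℝ] Lp ℝ 2 μ)
    (hdense : Dense (V.domain : Set (Lp ℝ 2 μ)))
    (hVgen : ∀ f (hf : f ∈ V.domain),
      Tendsto (fun t : ℝ => t⁻¹ • (Koop t f - f)) (𝓝[≠] (0 : ℝ)) (𝓝 (V ⟨f, hf⟩)))
    (hVdom : ∀ f g : Lp ℝ 2 μ,
      Tendsto (fun t : ℝ => t⁻¹ • (Koop t f - f)) (𝓝[≠] (0 : ℝ)) (𝓝 g) → f ∈ V.domain)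
    -- the RKHS of `k`, encoded by its feature map:
    {HK : Type u} [NormedAddCommGroup HK] [InnerProductSpace ℝ HK] [CompleteSpace HK]
    (φf φd : α → HK) (hφc : Continuous φf) (hφdc : Continuous φd)
    (hφk : ∀ x y, (inner ℝ (φf x) (φf y) : ℝ) = k x y)
    (hφd : ∀ x, HasDerivAt (fun t => φf (Φ t x)) (φd x) 0)
    (K : Lp ℝ 2 μ →L[ℝ] HK) (Kst : HK →L[ℝ] Lp ℝ 2 μ)
    (hadj : ContinuousLinearMap.adjoint K = Kst)
    (hKst : ∀ h : HK, ∀ᵐ x ∂μ, (Kst h) x = (inner ℝ (φf x) h : ℝ))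
    (G : Lp ℝ 2 μ →L[ℝ] Lp ℝ 2 μ) (hGdef : G = Kst.comp K)
    -- the positive square root `G^{1/2}`:
    (sqrtG : Lp ℝ 2 μ →L[ℝ] Lp ℝ 2 μ)
    (hsq : sqrtG.comp sqrtG = G)
    (hsqsa : IsSelfAdjoint sqrtG)
    (hsqpos : ∀ f, 0 ≤ (inner ℝ f (sqrtG f) : ℝ))
    -- the partial isometry `U` of the polar decomposition `K = U G^{1/2}`:
    (Uiso : Lp ℝ 2 μ →L[ℝ] HK)
    (hpolar : K = Uiso.comp sqrtG)
    (hUcontr : ∀ f, ‖Uiso f‖ ≤ ‖f‖)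
    (hUinit : ∀ f, ‖Uiso (sqrtG f)‖ = ‖sqrtG f‖)
    (hUker : ∀ g, (∀ f, (inner ℝ g (sqrtG f) : ℝ) = 0) → Uiso g = 0)
    -- the RKHS-compactified generator `W = K V K*`:
    (hKstdom : ∀ h : HK, Kst h ∈ V.domain)
    (W : HK →L[ℝ] HK)
    (hW : ∀ h (hh : Kst h ∈ V.domain), W h = K (V ⟨Kst h, hh⟩)) :
    Dense {f : Lp ℝ 2 μ | sqrtG f ∈ V.domain} ∧
    (∃ C : ℝ, 0 ≤ C ∧ ∀ f (hf : sqrtG f ∈ V.domain),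
      ‖sqrtG (V ⟨sqrtG f, hf⟩)‖ ≤ C * ‖f‖) ∧
    ∃ Vt : Lp ℝ 2 μ →L[ℝ] Lp ℝ 2 μ,
      (∀ f (hf : sqrtG f ∈ V.domain), Vt f = sqrtG (V ⟨sqrtG f, hf⟩)) ∧
      ContinuousLinearMap.adjoint Vt = -Vt ∧
      (∀ {ι : Type u} (b : HilbertBasis ι ℝ (Lp ℝ 2 μ)),
        Summable fun i => ‖Vt (b i)‖ ^ 2) ∧
      Vt = (ContinuousLinearMap.adjoint Uiso).comp (W.comp Uiso) ∧
      (∀ Vt' : Lp ℝ 2 μ →L[ℝ] Lp ℝ 2 μ,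
        ContinuousLinearMap.adjoint Vt' = -Vt' →
        (∀ f (hf : sqrtG f ∈ V.domain), Vt' f = sqrtG (V ⟨sqrtG f, hf⟩)) →
        Vt' = Vt) ∧
      (Function.Injective G →
        (∀ f, ‖Uiso f‖ = ‖f‖) ∧
        closure (Set.range Uiso) = closure (Set.range K)) :=
  stmt7_general μ X hXc hXfull Φ hΦ0 hΦgrp hΦcont hΦmp Koop hKoop V hVgen φf φd hφc hφdc hφd K Kst
    hadj hKst G sqrtG hsq hsqsa Uiso hpolar hUcontr hUinit hKstdom W hW
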